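/- Let φ : A → B(H₁ ⊕ H₂) be a *-representation with block decomposition φ(a) = [[φ₁₁(a), φ₁₂(a)], [φ₂₁(a), φ₂₂(a)]]. If φ₁₁ is a *-homomorphism modulo the compact operators K(H₁) (i.e., φ₁₁(ab) − φ₁₁(a)φ₁₁(b) and φ₁₁(a*) − φ₁₁(a)* are compact for all a, b), then φ₁₂(a) and φ₂₁(a) are compact for every a ∈ A, and φ₂₂ is a *-homomorphism modulo K(H₂). -/

import Mathlib

/-!
With `Q = 1 - P`, the multiplicativity defect of a corner is a product of off-diagonal blocks:
`Pφ(ab)P - Pφ(a)P·Pφ(b)P = Pφ(a)Q·Qφ(b)P`. For `T = Qφ(a)P` this makes `T*T = Pφ(a*)Q·Qφ(a)P`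
compact, hence `T` is compact (since `‖Tx‖² ≤ ‖T*Tx‖‖x‖`), and so is its adjoint `Pφ(a*)Q`.
The defect of the `(2,2)` corner is `Qφ(a)P·Pφ(b)Q`, now compact, while both corners commute with
`*` exactly.
-/

open Metric Set
open scoped InnerProduct

theorem TotallyBounded.image_of_forall_dist_lt {α β γ : Type*} [PseudoMetricSpace β]
    [PseudoMetricSpace γ] {f : α → β} {g : α → γ} {s : Set α} (hg : TotallyBounded (g '' s))
    (hfg : ∀ ε > 0, ∃ δ > 0, ∀ x ∈ s, ∀ y ∈ s, dist (g x) (g y) < δ → dist (f x) (f y) < ε) :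
    TotallyBounded (f '' s) := by
  rw [Metric.totallyBounded_iff]
  intro ε hε
  obtain ⟨δ, hδ, hδε⟩ := hfg ε hε
  obtain ⟨t, hts, htfin, hcover⟩ := finite_approx_of_totallyBounded hg δ hδ
  obtain ⟨u, hus, hufin, rfl⟩ : ∃ u ⊆ s, u.Finite ∧ t = g '' u :=
    exists_subset_image_finite_and.mp ⟨t, hts, htfin, rfl⟩
  refine ⟨f '' u, hufin.image f, ?_⟩
  rintro _ ⟨x, hx, rfl⟩
  obtain ⟨_, ⟨y, hyu, rfl⟩, hxy⟩ : ∃ z ∈ g '' u, g x ∈ ball z δ := by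
    simpa using hcover (mem_image_of_mem g hx)
  exact mem_biUnion (mem_image_of_mem f hyu) (hδε x hx y (hus hyu) hxy)

section Adjoint

open ContinuousLinearMap

variable {𝕜 E F : Type*} [RCLike 𝕜] [NormedAddCommGroup E] [InnerProductSpace 𝕜 E]
  [CompleteSpace E] [NormedAddCommGroup F] [InnerProductSpace 𝕜 F] [CompleteSpace F]

theorem ContinuousLinearMap.apply_norm_sq_le_norm_adjoint_comp_self_apply_mul_norm
    (T : E →L[𝕜] F) (x : E) :
    ‖T x‖ ^ 2 ≤ ‖(T† ∘L T) x‖ * ‖x‖ :=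
  (apply_norm_sq_eq_inner_adjoint_left T x).trans_le
    ((RCLike.re_le_norm _).trans (norm_inner_le_norm _ _))

theorem IsCompactOperator.of_adjoint_comp_self {T : E →L[𝕜] F}
    (h : IsCompactOperator (T† ∘L T)) : IsCompactOperator T := by
  refine (isCompactOperator_iff_isCompact_closure_image_ball (T : E →ₗ[𝕜] F) one_pos).mpr ?_
  have hA : TotallyBounded ((T† ∘L T) '' ball 0 1) :=
    (h.isCompact_closure_image_ball 1).totallyBounded.subset subset_closure
  refine (hA.image_of_forall_dist_lt ?_).closure.isCompact_of_isClosed isClosed_closure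
  intro ε hε
  refine ⟨ε ^ 2 / 2, by positivity, fun x hx y hy hxy => ?_⟩
  rw [mem_ball_zero_iff] at hx hy
  rw [dist_eq_norm, ← map_sub] at hxy ⊢
  have hxy2 : ‖x - y‖ < 2 := (norm_sub_le x y).trans_lt (by linarith)
  have key := apply_norm_sq_le_norm_adjoint_comp_self_apply_mul_norm T (x - y)
  refine lt_of_pow_lt_pow_left₀ 2 hε.le (key.trans_lt ?_)
  nlinarith [norm_nonneg ((T† ∘L T) (x - y)), norm_nonneg (x - y)]

theorem IsCompactOperator.adjoint {T : E →L[𝕜] F} (hT : IsCompactOperator T) :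
    IsCompactOperator (T†) :=
  .of_adjoint_comp_self (by rw [adjoint_adjoint]; exact hT.comp_clm (T†))

end Adjoint

theorem IsIdempotentElem.corner_mul_sub_corner_mul_corner {R : Type*} [Ring R] {p : R}
    (hp : IsIdempotentElem p) (x y : R) :
    p * (x * y) * p - p * x * p * (p * y * p) = p * x * (1 - p) * ((1 - p) * y * p) := by
  calc p * (x * y) * p - p * x * p * (p * y * p)
      = p * (x * y) * p - p * x * (p * p) * y * p := by noncomm_ring
    _ = p * x * (1 - p) * y * p := by rw [hp.eq]; noncomm_ring
    _ = p * x * ((1 - p) * (1 - p)) * y * p := by rw [hp.one_sub.eq]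
    _ = _ := by noncomm_ring

theorem IsSelfAdjoint.star_mul_mul {R : Type*} [Semigroup R] [StarMul R] {p q : R}
    (hp : IsSelfAdjoint p) (hq : IsSelfAdjoint q) (x : R) :
    star (p * x * q) = q * star x * p := by
  rw [star_mul, star_mul, hp.star_eq, hq.star_eq, mul_assoc]

theorem stmt4_general
    {H : Type*} [NormedAddCommGroup H] [InnerProductSpace ℂ H] [CompleteSpace H]
    {A : Type*} [NonUnitalNormedRing A] [StarRing A]
    [NormedSpace ℂ A]
    (φ : A →⋆ₙₐ[ℂ] (H →L[ℂ] H))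
    (P : H →L[ℂ] H) (hPidem : IsIdempotentElem P) (hPsa : IsSelfAdjoint P)
    (h11mul : ∀ a b : A,
      IsCompactOperator ⇑(P * φ (a * b) * P - (P * φ a * P) * (P * φ b * P))) :
    (∀ a : A, IsCompactOperator ⇑(P * φ a * (1 - P))) ∧
    (∀ a : A, IsCompactOperator ⇑((1 - P) * φ a * P)) ∧
    (∀ a b : A,
      IsCompactOperator
        ⇑((1 - P) * φ (a * b) * (1 - P) -
            ((1 - P) * φ a * (1 - P)) * ((1 - P) * φ b * (1 - P)))) ∧
    (∀ a : A,
      IsCompactOperator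
        ⇑((1 - P) * φ (star a) * (1 - P) - star ((1 - P) * φ a * (1 - P)))) := by
  have hQsa : IsSelfAdjoint (1 - P) := (IsSelfAdjoint.one _).sub hPsa
  have corner₁₁ (a b : A) : P * φ (a * b) * P - (P * φ a * P) * (P * φ b * P) =
      P * φ a * (1 - P) * ((1 - P) * φ b * P) := by
    rw [map_mul]; exact hPidem.corner_mul_sub_corner_mul_corner _ _
  have corner₂₂ (a b : A) : (1 - P) * φ (a * b) * (1 - P) -
      ((1 - P) * φ a * (1 - P)) * ((1 - P) * φ b * (1 - P)) =
      (1 - P) * φ a * P * (P * φ b * (1 - P)) := by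
    rw [map_mul, hPidem.one_sub.corner_mul_sub_corner_mul_corner, sub_sub_cancel]
  have h21 (a : A) : IsCompactOperator ⇑((1 - P) * φ a * P) := by
    refine .of_adjoint_comp_self (?_ : IsCompactOperator ⇑(star ((1 - P) * φ a * P) * _))
    rw [hQsa.star_mul_mul hPsa, ← map_star, ← corner₁₁]
    exact h11mul _ _
  have h12 (a : A) : IsCompactOperator ⇑(P * φ a * (1 - P)) := by
    have := (h21 (star a)).adjoint
    rwa [← ContinuousLinearMap.star_eq_adjoint, hQsa.star_mul_mul hPsa, ← map_star,
      star_star] at this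
  refine ⟨h12, h21, fun a b => ?_, fun a => ?_⟩
  · rw [corner₂₂]
    exact (h21 a).comp_clm _
  · rw [map_star, hQsa.star_mul_mul hQsa, sub_self]
    exact isCompactOperator_zero

/-- block lemma: if the `(1,1)` corner `a ↦ Pφ(a)P` of a
*-representation `φ` is a *-homomorphism modulo the compacts (`P` an orthogonal
projection), then both off-diagonal corners `Pφ(a)(1-P)` and `(1-P)φ(a)P` are
compact for every `a`, and the `(2,2)` corner is a *-homomorphism modulo the
compacts. -/
theorem stmt4
    {H : Type*} [NormedAddCommGroup H] [InnerProductSpace ℂ H] [CompleteSpace H]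
    {A : Type*} [NonUnitalNormedRing A] [StarRing A] [CStarRing A]
    [NormedSpace ℂ A] [SMulCommClass ℂ A A] [IsScalarTower ℂ A A] [StarModule ℂ A]
    (φ : A →⋆ₙₐ[ℂ] (H →L[ℂ] H))
    (P : H →L[ℂ] H) (hPidem : IsIdempotentElem P) (hPsa : IsSelfAdjoint P)
    (h11mul : ∀ a b : A,
      IsCompactOperator ⇑(P * φ (a * b) * P - (P * φ a * P) * (P * φ b * P)))
    (h11star : ∀ a : A,
      IsCompactOperator ⇑(P * φ (star a) * P - star (P * φ a * P))) :
    (∀ a : A, IsCompactOperator ⇑(P * φ a * (1 - P))) ∧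
    (∀ a : A, IsCompactOperator ⇑((1 - P) * φ a * P)) ∧
    (∀ a b : A,
      IsCompactOperator
        ⇑((1 - P) * φ (a * b) * (1 - P) -
            ((1 - P) * φ a * (1 - P)) * ((1 - P) * φ b * (1 - P)))) ∧
    (∀ a : A,
      IsCompactOperator
        ⇑((1 - P) * φ (star a) * (1 - P) - star ((1 - P) * φ a * (1 - P)))) :=
  stmt4_general φ P hPidem hPsa h11mul
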